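/- arXiv:1303.6445 — 5 statements merged into one kernel-verified Lean document; each statement's English description precedes it below -/
import Mathlib

section
/- Let H₁ and H₂ be Hilbert spaces, L : H₁ → H₂ a bounded linear operator, and φ ∈ H₂. Then φ is in the range of L if and only if there exists c > 0 such that for all ψ ∈ H₂, |⟨ψ, φ⟩| ≤ c‖L*ψ‖, where L* is the adjoint of L. -/
open scoped InnerProductSpace

/-! The bound forces `⟪φ, ψ⟫ = 0` whenever `L† ψ = 0`, so `L† ψ ↦ ⟪φ, ψ⟫` is a well-defined
functional on the range of `L†`, bounded by `c`. Extending it by Hahn–Banach and representing the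
extension by Riesz as `⟪x, ·⟫` gives `⟪L x, ψ⟫ = ⟪x, L† ψ⟫ = ⟪φ, ψ⟫` for all `ψ`, i.e. `L x = φ`. -/

theorem LinearMap.exists_comp_rangeRestrict_eq_of_ker_le {R M N P : Type*} [Ring R]
    [AddCommGroup M] [Module R M] [AddCommGroup N] [Module R N] [AddCommGroup P] [Module R P]
    (T : M →ₗ[R] N) (f : M →ₗ[R] P) (h : LinearMap.ker T ≤ LinearMap.ker f) :
    ∃ g : LinearMap.range T →ₗ[R] P, g ∘ₗ T.rangeRestrict = f :=
  ⟨(LinearMap.ker T).liftQ f h ∘ₗ T.quotKerEquivRange.symm.toLinearMap, by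
    ext y
    simp [LinearMap.rangeRestrict, LinearMap.codRestrict, T.quotKerEquivRange_symm_apply_image]⟩

theorem StrongDual.exists_comp_eq_of_norm_le {𝕜 E F : Type*} [RCLike 𝕜]
    [NormedAddCommGroup E] [NormedSpace 𝕜 E] [AddCommGroup F] [Module 𝕜 F]
    (T : F →ₗ[𝕜] E) (f : F →ₗ[𝕜] 𝕜) (c : ℝ) (h : ∀ y, ‖f y‖ ≤ c * ‖T y‖) :
    ∃ g : StrongDual 𝕜 E, ∀ y, g (T y) = f y := by
  have hker : LinearMap.ker T ≤ LinearMap.ker f := fun y hy ↦ by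
    simpa [LinearMap.mem_ker.mp hy] using h y
  obtain ⟨f₀, hf₀⟩ := T.exists_comp_rangeRestrict_eq_of_ker_le f hker
  have hbound : ∀ v : LinearMap.range T, ‖f₀ v‖ ≤ c * ‖v‖ := by
    rintro ⟨-, y, rfl⟩
    have hy := h y
    rwa [← hf₀, LinearMap.comp_apply] at hy
  obtain ⟨g, hg, -⟩ := exists_extension_norm_eq _ (f₀.mkContinuous c hbound)
  exact ⟨g, fun y ↦ (hg (T.rangeRestrict y)).trans (LinearMap.congr_fun hf₀ y)⟩

section Adjoint

variable {𝕜 E F : Type*} [RCLike 𝕜] [NormedAddCommGroup E] [InnerProductSpace 𝕜 E]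
  [CompleteSpace E] [NormedAddCommGroup F] [InnerProductSpace 𝕜 F] [CompleteSpace F]

theorem ContinuousLinearMap.norm_inner_apply_le (L : E →L[𝕜] F) (x : E) (ψ : F) :
    ‖⟪ψ, L x⟫_𝕜‖ ≤ ‖x‖ * ‖adjoint L ψ‖ := by
  rw [← adjoint_inner_left, mul_comm]
  exact norm_inner_le_norm _ _

theorem ContinuousLinearMap.mem_range_of_norm_inner_le (L : E →L[𝕜] F) {φ : F} (c : ℝ)
    (h : ∀ ψ, ‖⟪ψ, φ⟫_𝕜‖ ≤ c * ‖adjoint L ψ‖) : φ ∈ Set.range L := by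
  obtain ⟨g, hg⟩ := StrongDual.exists_comp_eq_of_norm_le (adjoint L : F →L[𝕜] E).toLinearMap
    (innerₛₗ 𝕜 φ) c fun ψ ↦ by simpa [norm_inner_symm] using h ψ
  refine ⟨(InnerProductSpace.toDual 𝕜 E).symm g, ext_inner_right 𝕜 fun ψ ↦ ?_⟩
  rw [← adjoint_inner_right, InnerProductSpace.toDual_symm_apply]
  exact hg ψ

end Adjoint

theorem stmt0 {H₁ H₂ : Type*} [NormedAddCommGroup H₁] [InnerProductSpace ℂ H₁] [CompleteSpace H₁]
    [NormedAddCommGroup H₂] [InnerProductSpace ℂ H₂] [CompleteSpace H₂]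
    (L : H₁ →L[ℂ] H₂) (φ : H₂) :
    φ ∈ Set.range L ↔
      ∃ c > 0, ∀ ψ : H₂, ‖⟪ψ, φ⟫_ℂ‖ ≤ c * ‖ContinuousLinearMap.adjoint L ψ‖ := by
  constructor
  · rintro ⟨x, rfl⟩
    refine ⟨‖x‖ + 1, by positivity, fun ψ ↦ (L.norm_inner_apply_le x ψ).trans ?_⟩
    gcongr
    linarith
  · rintro ⟨c, -, h⟩
    exact L.mem_range_of_norm_inner_le c h
end

section
/- Let H₁ and H₂ be Hilbert spaces, L : H₁ → H₂ a bounded linear operator, f : H₂ → ℝ a function, and suppose there exist constants c₁ > 0 and c₂ > 0 such that c₁‖L*ψ‖ ≤ f(ψ) ≤ c₂‖L*ψ‖ for all ψ ∈ H₂. Then for φ ∈ H₂, φ is in the range of L if and only if there exists c₃ > 0 such that |⟨ψ, φ⟩| ≤ c₃ f(ψ) for all ψ ∈ H₂. -/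
open scoped InnerProductSpace

theorem stmt1 {H₁ H₂ : Type*} [NormedAddCommGroup H₁] [InnerProductSpace ℂ H₁] [CompleteSpace H₁]
    [NormedAddCommGroup H₂] [InnerProductSpace ℂ H₂] [CompleteSpace H₂]
    (L : H₁ →L[ℂ] H₂) (f : H₂ → ℝ) (c₁ c₂ : ℝ) (hc₁ : 0 < c₁) (hc₂ : 0 < c₂)
    (hf : ∀ ψ : H₂, c₁ * ‖ContinuousLinearMap.adjoint L ψ‖ ≤ f ψ ∧
      f ψ ≤ c₂ * ‖ContinuousLinearMap.adjoint L ψ‖)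
    (φ : H₂) :
    φ ∈ Set.range L ↔ ∃ c₃ > 0, ∀ ψ : H₂, ‖⟪ψ, φ⟫_ℂ‖ ≤ c₃ * f ψ := by
  set A := ContinuousLinearMap.adjoint L with hA
  constructor
  · rintro ⟨x, rfl⟩
    refine ⟨(‖x‖ + 1) / c₁, by positivity, fun ψ => ?_⟩
    have h1 : ⟪ψ, L x⟫_ℂ = ⟪A ψ, x⟫_ℂ :=
      (ContinuousLinearMap.adjoint_inner_left L x ψ).symm
    have h2 : ‖⟪A ψ, x⟫_ℂ‖ ≤ ‖A ψ‖ * ‖x‖ := norm_inner_le_norm _ _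
    have h3 := (hf ψ).1
    have hx : (0:ℝ) ≤ ‖x‖ := norm_nonneg _
    have hAψ : (0:ℝ) ≤ ‖A ψ‖ := norm_nonneg _
    rw [h1]
    rw [div_mul_eq_mul_div, le_div_iff₀ hc₁]
    nlinarith [norm_nonneg (⟪A ψ, x⟫_ℂ)]
  · rintro ⟨c, hc, hbound⟩
    have hb : ∀ ψ : H₂, ‖⟪φ, ψ⟫_ℂ‖ ≤ (c * c₂) * ‖A ψ‖ := by
      intro ψ
      have h1 : ‖⟪φ, ψ⟫_ℂ‖ = ‖⟪ψ, φ⟫_ℂ‖ := norm_inner_symm _ _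
      have h2 := hbound ψ
      have h3 := (hf ψ).2
      rw [h1]
      calc ‖⟪ψ, φ⟫_ℂ‖ ≤ c * f ψ := h2
        _ ≤ c * (c₂ * ‖A ψ‖) := by nlinarith
        _ = (c * c₂) * ‖A ψ‖ := by ring
    have key : ∀ ψ ψ' : H₂, A ψ = A ψ' → ⟪φ, ψ⟫_ℂ = ⟪φ, ψ'⟫_ℂ := by
      intro ψ ψ' h
      have h0 : A (ψ - ψ') = 0 := by rw [map_sub, h, sub_self]
      have := hb (ψ - ψ')
      rw [h0, norm_zero, mul_zero] at this
      have hz : ⟪φ, ψ - ψ'⟫_ℂ = 0 := by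
        have : ‖⟪φ, ψ - ψ'⟫_ℂ‖ = 0 := le_antisymm this (norm_nonneg _)
        exact norm_eq_zero.mp this
      rw [inner_sub_right] at hz
      exact sub_eq_zero.mp hz
    set p : Submodule ℂ H₁ := LinearMap.range (A : H₂ →ₗ[ℂ] H₁) with hp
    have sel : ∀ u : p, ∃ ψ : H₂, A ψ = (u : H₁) := fun u => u.2
    have selspec : ∀ u : p, A (sel u).choose = (u : H₁) := fun u => (sel u).choose_spec
    let G : p →ₗ[ℂ] ℂ :=
      { toFun := fun u => ⟪φ, (sel u).choose⟫_ℂ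
        map_add' := by
          intro u v
          have h : A ((sel u).choose + (sel v).choose) = A ((sel (u + v)).choose) := by
            rw [map_add, selspec, selspec, selspec]; rfl
          show ⟪φ, (sel (u + v)).choose⟫_ℂ = ⟪φ, (sel u).choose⟫_ℂ + ⟪φ, (sel v).choose⟫_ℂ
          rw [← key _ _ h, inner_add_right]
        map_smul' := by
          intro a u
          have h : A (a • (sel u).choose) = A ((sel (a • u)).choose) := by
            rw [map_smul, selspec, selspec]; rfl
          show ⟪φ, (sel (a • u)).choose⟫_ℂ = (RingHom.id ℂ) a • ⟪φ, (sel u).choose⟫_ℂ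
          rw [← key _ _ h, inner_smul_right]
          rfl }
    have Gbound : ∀ u : p, ‖G u‖ ≤ (c * c₂) * ‖u‖ := by
      intro u
      have : G u = ⟪φ, (sel u).choose⟫_ℂ := rfl
      rw [this]
      calc ‖⟪φ, (sel u).choose⟫_ℂ‖ ≤ (c * c₂) * ‖A (sel u).choose‖ := hb _
        _ = (c * c₂) * ‖u‖ := by rw [selspec]; rfl
    let Gc : p →L[ℂ] ℂ := G.mkContinuous (c * c₂) Gbound
    obtain ⟨G', hext, -⟩ := exists_extension_norm_eq p Gc
    set y : H₁ := (InnerProductSpace.toDual ℂ H₁).symm G' with hy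
    have hyA : ∀ ψ : H₂, ⟪y, A ψ⟫_ℂ = ⟪φ, ψ⟫_ℂ := by
      intro ψ
      have hmem : A ψ ∈ p := ⟨ψ, rfl⟩
      have h1 : ⟪y, A ψ⟫_ℂ = G' (A ψ) := InnerProductSpace.toDual_symm_apply
      have h2 : G' (A ψ) = Gc ⟨A ψ, hmem⟩ := hext ⟨A ψ, hmem⟩
      have h3 : Gc ⟨A ψ, hmem⟩ = ⟪φ, (sel ⟨A ψ, hmem⟩).choose⟫_ℂ := rfl
      have h4 : A (sel ⟨A ψ, hmem⟩).choose = A ψ := selspec ⟨A ψ, hmem⟩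
      rw [h1, h2, h3, key _ _ h4]
    refine ⟨y, ?_⟩
    apply ext_inner_left ℂ
    intro ψ
    have h5 : ⟪ψ, L y⟫_ℂ = ⟪A ψ, y⟫_ℂ :=
      (ContinuousLinearMap.adjoint_inner_left L y ψ).symm
    rw [h5, ← inner_conj_symm, hyA, inner_conj_symm]
end

section
/- Let H₁ and H₂ be Hilbert spaces, L : H₁ → H₂ a bounded linear operator, f : H₂ → ℝ comparable to ψ ↦ ‖L*ψ‖ in the sense that c₁‖L*ψ‖ ≤ f(ψ) ≤ c₂‖L*ψ‖ for some c₁, c₂ > 0 and all ψ. Then a nonzero φ ∈ H₂ lies in the range of L if and only if the infimum of f over the set {ψ ∈ H₂ : ⟨ψ, φ⟩ = 1} is strictly positive. -/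
open scoped InnerProductSpace

/-!
If `φ = L x`, then `|⟪ψ, φ⟫| = |⟪L* ψ, x⟫| ≤ ‖x‖ ‖L* ψ‖`. Conversely, such a bound `C` makes
`L* ψ ↦ ⟪φ, ψ⟫` a well-defined bounded functional on the range of `L*`; by Hahn–Banach and Riesz it
is `⟪x, ·⟫` for some `x`, and then `L x = φ`. Rescaling `ψ` to the hyperplane `⟪ψ, φ⟫ = 1` shows that
the best constant `C` is the reciprocal of the infimum of `‖L* ψ‖` there, and the comparison with `f`
changes this infimum only by the factors `c₁`, `c₂`.
-/

open LinearMap in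
theorem LinearMap.exists_strongDual_comp_eq_of_norm_le {𝕜 E F : Type*} [RCLike 𝕜]
    [AddCommGroup E] [Module 𝕜 E] [NormedAddCommGroup F] [NormedSpace 𝕜 F]
    (A : E →ₗ[𝕜] F) (g : E →ₗ[𝕜] 𝕜) (C : ℝ) (h : ∀ x, ‖g x‖ ≤ C * ‖A x‖) :
    ∃ G : StrongDual 𝕜 F, ∀ x, G (A x) = g x := by
  have hker : ker A ≤ ker g := fun x hx => by
    simpa [mem_ker.mp hx] using h x
  let g₀ : range A →ₗ[𝕜] 𝕜 := (ker A).liftQ g hker ∘ₗ A.quotKerEquivRange.symm.toLinearMap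
  have hg₀ : ∀ x, g₀ ⟨A x, mem_range_self A x⟩ = g x := fun x => by
    simp [g₀, quotKerEquivRange_symm_apply_image]
  have hbound : ∀ v : range A, ‖g₀ v‖ ≤ C * ‖v‖ := by
    rintro ⟨_, x, rfl⟩
    simpa [hg₀] using h x
  obtain ⟨G, hG, -⟩ := exists_extension_norm_eq (range A) (g₀.mkContinuous C hbound)
  exact ⟨G, fun x => (hG ⟨A x, mem_range_self A x⟩).trans (hg₀ x)⟩

namespace ContinuousLinearMap

variable {𝕜 E F : Type*} [RCLike 𝕜] [NormedAddCommGroup E] [InnerProductSpace 𝕜 E]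
  [NormedAddCommGroup F] [InnerProductSpace 𝕜 F]

theorem mem_range_iff_exists_norm_inner_le [CompleteSpace E] [CompleteSpace F]
    (L : E →L[𝕜] F) (φ : F) :
    φ ∈ Set.range L ↔ ∃ C, ∀ ψ, ‖⟪ψ, φ⟫_𝕜‖ ≤ C * ‖adjoint L ψ‖ := by
  constructor
  · rintro ⟨x, rfl⟩
    refine ⟨‖x‖, fun ψ => ?_⟩
    rw [← adjoint_inner_left, mul_comm]
    exact norm_inner_le_norm _ _
  · rintro ⟨C, hC⟩
    obtain ⟨G, hG⟩ := (adjoint L).toLinearMap.exists_strongDual_comp_eq_of_norm_le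
      (innerₛₗ 𝕜 φ) C fun ψ => by simpa [norm_inner_symm] using hC ψ
    refine ⟨(InnerProductSpace.toDual 𝕜 E).symm G, ext_inner_right 𝕜 fun ψ => ?_⟩
    rw [← adjoint_inner_right, InnerProductSpace.toDual_symm_apply]
    simpa using hG ψ

end ContinuousLinearMap

theorem mul_sInf_image_le_sInf_image {α : Type*} {s : Set α} (hs : s.Nonempty) {f g : α → ℝ}
    {c : ℝ} (hc : 0 ≤ c) (hg : BddBelow (g '' s)) (h : ∀ x, c * g x ≤ f x) :
    c * sInf (g '' s) ≤ sInf (f '' s) :=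
  le_csInf (hs.image f) <| by
    rintro _ ⟨x, hx, rfl⟩
    exact (mul_le_mul_of_nonneg_left (csInf_le hg ⟨x, hx, rfl⟩) hc).trans (h x)

theorem sInf_image_pos_iff_of_comparable {α : Type*} {s : Set α} (hs : s.Nonempty) {f g : α → ℝ}
    {c₁ c₂ : ℝ} (hc₁ : 0 < c₁) (hc₂ : 0 < c₂) (hg : ∀ x, 0 ≤ g x)
    (h : ∀ x, c₁ * g x ≤ f x ∧ f x ≤ c₂ * g x) :
    0 < sInf (f '' s) ↔ 0 < sInf (g '' s) := by
  have hf : ∀ x, 0 ≤ f x := fun x => (mul_nonneg hc₁.le (hg x)).trans (h x).1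
  have bdd : ∀ u : α → ℝ, (∀ x, 0 ≤ u x) → BddBelow (u '' s) := fun u hu =>
    ⟨0, by rintro _ ⟨x, -, rfl⟩; exact hu x⟩
  constructor
  · intro hpos
    refine (mul_pos (inv_pos.2 hc₂) hpos).trans_le
      (mul_sInf_image_le_sInf_image hs (inv_nonneg.2 hc₂.le) (bdd f hf) fun x => ?_)
    exact (inv_mul_le_iff₀ hc₂).2 (h x).2
  · intro hpos
    exact (mul_pos hc₁ hpos).trans_le
      (mul_sInf_image_le_sInf_image hs hc₁.le (bdd g hg) fun x => (h x).1)

section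

variable {𝕜 F G : Type*} [RCLike 𝕜] [NormedAddCommGroup F] [InnerProductSpace 𝕜 F]
  [SeminormedAddCommGroup G] [NormedSpace 𝕜 G]

theorem inner_inv_inner_smul_left {ψ φ : F} (h : ⟪ψ, φ⟫_𝕜 ≠ 0) :
    ⟪(⟪φ, ψ⟫_𝕜)⁻¹ • ψ, φ⟫_𝕜 = 1 := by
  rw [inner_smul_left, map_inv₀, inner_conj_symm, inv_mul_cancel₀ h]

theorem sInf_norm_image_inner_eq_one_pos_iff (T : F →ₗ[𝕜] G) {φ : F} (hφ : φ ≠ 0) :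
    0 < sInf ((fun ψ => ‖T ψ‖) '' {ψ | ⟪ψ, φ⟫_𝕜 = 1}) ↔
      ∃ C, ∀ ψ, ‖⟪ψ, φ⟫_𝕜‖ ≤ C * ‖T ψ‖ := by
  set S := {ψ | ⟪ψ, φ⟫_𝕜 = 1}
  have hS : S.Nonempty := ⟨_, inner_inv_inner_smul_left (inner_self_ne_zero.2 hφ)⟩
  constructor
  · intro hpos
    refine ⟨(sInf ((fun ψ => ‖T ψ‖) '' S))⁻¹, fun ψ => ?_⟩
    by_cases ha : ⟪ψ, φ⟫_𝕜 = 0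
    · rw [ha, norm_zero]; positivity
    have hbdd : BddBelow ((fun ψ => ‖T ψ‖) '' S) := ⟨0, by rintro _ ⟨_, -, rfl⟩; positivity⟩
    have hle : sInf ((fun ψ => ‖T ψ‖) '' S) ≤ ‖⟪ψ, φ⟫_𝕜‖⁻¹ * ‖T ψ‖ := by
      refine (csInf_le hbdd ⟨_, inner_inv_inner_smul_left ha, rfl⟩).trans_eq ?_
      simp only [map_smul, norm_smul, norm_inv, norm_inner_symm]
    rw [le_inv_mul_iff₀ (norm_pos_iff.2 ha)] at hle
    rwa [inv_mul_eq_div, le_div_iff₀ hpos]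
  · rintro ⟨C, hC⟩
    have hone : ∀ ψ ∈ S, 1 ≤ C * ‖T ψ‖ := fun ψ hψ => by
      simpa [show ⟪ψ, φ⟫_𝕜 = 1 from hψ] using hC ψ
    have hCpos : 0 < C :=
      pos_of_mul_pos_left (one_pos.trans_le (hone _ hS.some_mem)) (norm_nonneg _)
    refine (inv_pos.2 hCpos).trans_le (le_csInf (hS.image _) ?_)
    rintro _ ⟨ψ, hψ, rfl⟩
    exact (inv_le_iff_one_le_mul₀' hCpos).2 (hone ψ hψ)

end

theorem stmt2 {H₁ H₂ : Type*} [NormedAddCommGroup H₁] [InnerProductSpace ℂ H₁] [CompleteSpace H₁]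
    [NormedAddCommGroup H₂] [InnerProductSpace ℂ H₂] [CompleteSpace H₂]
    (L : H₁ →L[ℂ] H₂) (f : H₂ → ℝ) (c₁ c₂ : ℝ) (hc₁ : 0 < c₁) (hc₂ : 0 < c₂)
    (hf : ∀ ψ : H₂, c₁ * ‖ContinuousLinearMap.adjoint L ψ‖ ≤ f ψ ∧
      f ψ ≤ c₂ * ‖ContinuousLinearMap.adjoint L ψ‖)
    (φ : H₂) (hφ : φ ≠ 0) :
    φ ∈ Set.range L ↔ 0 < sInf (f '' {ψ : H₂ | ⟪ψ, φ⟫_ℂ = 1}) := by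
  have hS : {ψ : H₂ | ⟪ψ, φ⟫_ℂ = 1}.Nonempty :=
    ⟨_, inner_inv_inner_smul_left (inner_self_ne_zero.2 hφ)⟩
  rw [L.mem_range_iff_exists_norm_inner_le,
    sInf_image_pos_iff_of_comparable hS hc₁ hc₂ (fun ψ => norm_nonneg _) hf]
  exact (sInf_norm_image_inner_eq_one_pos_iff (ContinuousLinearMap.adjoint L).toLinearMap hφ).symm
end

section
/- Let H₂ be a Hilbert space, L a bounded operator into H₂ with adjoint L*, f comparable to ‖L*·‖ with constants c₁, c₂ > 0, and φ ∈ H₂ not in the range of L. Then for every ε > 0 there exists ψ ∈ H₂ with ⟨ψ, φ⟩ = 1 and f(ψ) < ε; i.e., inf{f(ψ) : ⟨ψ, φ⟩ = 1} = 0. -/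
open scoped InnerProductSpace

open ContinuousLinearMap in
lemma aux_mem_range {H₁ H₂ : Type*} [NormedAddCommGroup H₁] [InnerProductSpace ℂ H₁]
    [CompleteSpace H₁] [NormedAddCommGroup H₂] [InnerProductSpace ℂ H₂] [CompleteSpace H₂]
    (L : H₁ →L[ℂ] H₂) (φ : H₂) (c : ℝ)
    (h : ∀ ψ : H₂, ‖⟪ψ, φ⟫_ℂ‖ ≤ c * ‖ContinuousLinearMap.adjoint L ψ‖) :
    φ ∈ Set.range L := by
  set A := ContinuousLinearMap.adjoint L with hA
  set p : H₂ →ₗ[ℂ] ℂ := (innerSL ℂ φ).toLinearMap with hp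
  have hker : LinearMap.ker (A : H₂ →ₗ[ℂ] H₁) ≤ LinearMap.ker p := by
    intro ψ hψ
    have hψ' : A ψ = 0 := hψ
    have := h ψ
    rw [hψ', norm_zero, mul_zero] at this
    have h0 : ⟪ψ, φ⟫_ℂ = 0 := by
      have := norm_le_zero_iff.mp this
      exact this
    simp only [LinearMap.mem_ker, hp, ContinuousLinearMap.coe_coe, innerSL_apply_apply]
    rw [← inner_conj_symm, h0, map_zero]
  set g₀ : LinearMap.range (A : H₂ →ₗ[ℂ] H₁) →ₗ[ℂ] ℂ :=
    (Submodule.liftQ _ p hker).comp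
      ((A : H₂ →ₗ[ℂ] H₁).quotKerEquivRange.symm : _ ≃ₗ[ℂ] _).toLinearMap with hg₀
  have hg₀eval : ∀ ψ : H₂, g₀ ⟨(A : H₂ →ₗ[ℂ] H₁) ψ, LinearMap.mem_range_self _ ψ⟩ = ⟪φ, ψ⟫_ℂ := by
    intro ψ
    simp only [hg₀, LinearMap.comp_apply, LinearEquiv.coe_coe]
    rw [LinearMap.quotKerEquivRange_symm_apply_image]
    simp [hp]
  have hbound : ∀ u : LinearMap.range (A : H₂ →ₗ[ℂ] H₁), ‖g₀ u‖ ≤ c * ‖u‖ := by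
    rintro ⟨-, ψ, rfl⟩
    rw [hg₀eval ψ]
    calc ‖⟪φ, ψ⟫_ℂ‖ = ‖⟪ψ, φ⟫_ℂ‖ := by rw [← inner_conj_symm φ ψ, RCLike.norm_conj]
    _ ≤ c * ‖A ψ‖ := h ψ
    _ = c * ‖(⟨A ψ, LinearMap.mem_range_self _ ψ⟩ : LinearMap.range (A : H₂ →ₗ[ℂ] H₁))‖ := rfl
  set g : LinearMap.range (A : H₂ →ₗ[ℂ] H₁) →L[ℂ] ℂ := LinearMap.mkContinuous g₀ c hbound
  obtain ⟨G, hG, -⟩ := exists_extension_norm_eq (LinearMap.range (A : H₂ →ₗ[ℂ] H₁)) g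
  set χ := (InnerProductSpace.toDual ℂ H₁).symm G with hχ
  refine ⟨χ, ?_⟩
  refine ext_inner_right ℂ ?_
  intro ψ
  have h1 : ⟪L χ, ψ⟫_ℂ = ⟪χ, A ψ⟫_ℂ := by
    rw [hA, ContinuousLinearMap.adjoint_inner_right]
  have h2 : ⟪χ, A ψ⟫_ℂ = G (A ψ) := by
    rw [hχ, InnerProductSpace.toDual_symm_apply]
  have h3 : G (A ψ) = g ⟨A ψ, LinearMap.mem_range_self _ ψ⟩ :=
    hG ⟨A ψ, LinearMap.mem_range_self _ ψ⟩
  rw [h1, h2, h3]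
  exact (hg₀eval ψ)

theorem stmt3 {H₁ H₂ : Type*} [NormedAddCommGroup H₁] [InnerProductSpace ℂ H₁] [CompleteSpace H₁]
    [NormedAddCommGroup H₂] [InnerProductSpace ℂ H₂] [CompleteSpace H₂]
    (L : H₁ →L[ℂ] H₂) (f : H₂ → ℝ) (c₁ c₂ : ℝ) (hc₁ : 0 < c₁) (hc₂ : 0 < c₂)
    (hf : ∀ ψ : H₂, c₁ * ‖ContinuousLinearMap.adjoint L ψ‖ ≤ f ψ ∧
      f ψ ≤ c₂ * ‖ContinuousLinearMap.adjoint L ψ‖)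
    (φ : H₂) (hφ : φ ∉ Set.range L) :
    (∀ ε > 0, ∃ ψ : H₂, ⟪ψ, φ⟫_ℂ = 1 ∧ f ψ < ε) ∧
      sInf (f '' {ψ : H₂ | ⟪ψ, φ⟫_ℂ = 1}) = 0 := by
  have key : ∀ ε > 0, ∃ ψ : H₂, ⟪ψ, φ⟫_ℂ = 1 ∧ f ψ < ε := by
    intro ε hε
    by_contra hcon
    push_neg at hcon
    apply hφ
    apply aux_mem_range L φ (c₂ / ε)
    intro ψ
    rcases eq_or_ne (⟪ψ, φ⟫_ℂ) 0 with h0 | h0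
    · rw [h0, norm_zero]
      positivity
    · set a := ⟪ψ, φ⟫_ℂ with ha
      set s := (starRingEnd ℂ a)⁻¹ with hs
      have hunit : ⟪s • ψ, φ⟫_ℂ = 1 := by
        rw [inner_smul_left, ← ha, hs, map_inv₀, RingHomCompTriple.comp_apply]
        simp only [RingHom.id_apply, starRingEnd_self_apply]
        exact inv_mul_cancel₀ h0
      have hε' := hcon _ hunit
      have hub := (hf (s • ψ)).2
      rw [map_smul, norm_smul] at hub
      have hsnorm : ‖s‖ = ‖a‖⁻¹ := by
        rw [hs, norm_inv, RCLike.norm_conj]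
      have : ε ≤ c₂ * (‖a‖⁻¹ * ‖ContinuousLinearMap.adjoint L ψ‖) := by
        calc ε ≤ f (s • ψ) := hε'
        _ ≤ c₂ * (‖s‖ * ‖ContinuousLinearMap.adjoint L ψ‖) := hub
        _ = c₂ * (‖a‖⁻¹ * ‖ContinuousLinearMap.adjoint L ψ‖) := by rw [hsnorm]
      have hna : 0 < ‖a‖ := norm_pos_iff.mpr h0
      rw [div_mul_eq_mul_div, le_div_iff₀ hε]
      calc ‖a‖ * ε ≤ ‖a‖ * (c₂ * (‖a‖⁻¹ * ‖ContinuousLinearMap.adjoint L ψ‖)) :=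
            mul_le_mul_of_nonneg_left this hna.le
      _ = c₂ * ‖ContinuousLinearMap.adjoint L ψ‖ := by
            rw [mul_comm c₂, ← mul_assoc, ← mul_assoc, mul_inv_cancel₀ hna.ne', one_mul,
              mul_comm]
  refine ⟨key, ?_⟩
  have hne : (f '' {ψ : H₂ | ⟪ψ, φ⟫_ℂ = 1}).Nonempty := by
    obtain ⟨ψ, hψ, -⟩ := key 1 one_pos
    exact ⟨f ψ, ψ, hψ, rfl⟩
  have hbdd : ∀ x ∈ f '' {ψ : H₂ | ⟪ψ, φ⟫_ℂ = 1}, (0:ℝ) ≤ x := by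
    rintro x ⟨ψ, -, rfl⟩
    have := (hf ψ).1
    nlinarith [norm_nonneg (ContinuousLinearMap.adjoint L ψ)]
  refine le_antisymm ?_ (le_csInf hne hbdd)
  by_contra hlt
  push_neg at hlt
  obtain ⟨ψ, hψ, hfψ⟩ := key _ hlt
  have := csInf_le ⟨0, fun x hx => hbdd x hx⟩ (⟨ψ, hψ, rfl⟩ : f ψ ∈ f '' {ψ : H₂ | ⟪ψ, φ⟫_ℂ = 1})
  linarith
end

section
/- Let H₂ be a Hilbert space, L a bounded operator into H₂, f comparable to ‖L*·‖ with positive constants, and φ ∈ range(L) with φ ≠ 0. Then there exists m > 0 such that f(ψ) ≥ m for every ψ ∈ H₂ satisfying ⟨ψ, φ⟩ = 1. -/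
open scoped InnerProductSpace

theorem stmt4 {H₁ H₂ : Type*} [NormedAddCommGroup H₁] [InnerProductSpace ℂ H₁] [CompleteSpace H₁]
    [NormedAddCommGroup H₂] [InnerProductSpace ℂ H₂] [CompleteSpace H₂]
    (L : H₁ →L[ℂ] H₂) (f : H₂ → ℝ) (c₁ c₂ : ℝ) (hc₁ : 0 < c₁) (hc₂ : 0 < c₂)
    (hf : ∀ ψ : H₂, c₁ * ‖ContinuousLinearMap.adjoint L ψ‖ ≤ f ψ ∧
      f ψ ≤ c₂ * ‖ContinuousLinearMap.adjoint L ψ‖)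
    (φ : H₂) (hφ : φ ∈ Set.range L) (hφ0 : φ ≠ 0) :
    ∃ m > 0, ∀ ψ : H₂, ⟪ψ, φ⟫_ℂ = 1 → m ≤ f ψ := by
  obtain ⟨x, hx⟩ := hφ
  have hx0 : x ≠ 0 := by rintro rfl; simp at hx; exact hφ0 hx.symm
  have hxn : 0 < ‖x‖ := norm_pos_iff.mpr hx0
  refine ⟨c₁ / ‖x‖, div_pos hc₁ hxn, fun ψ hψ => ?_⟩
  have h1 : ⟪ContinuousLinearMap.adjoint L ψ, x⟫_ℂ = 1 := by
    rw [ContinuousLinearMap.adjoint_inner_left, hx, hψ]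
  have h2 : (1 : ℝ) ≤ ‖ContinuousLinearMap.adjoint L ψ‖ * ‖x‖ := by
    calc (1 : ℝ) = ‖⟪ContinuousLinearMap.adjoint L ψ, x⟫_ℂ‖ := by rw [h1]; simp
    _ ≤ ‖ContinuousLinearMap.adjoint L ψ‖ * ‖x‖ := norm_inner_le_norm _ _
  have h3 : 1 / ‖x‖ ≤ ‖ContinuousLinearMap.adjoint L ψ‖ := by
    rw [div_le_iff₀ hxn]; linarith
  calc c₁ / ‖x‖ = c₁ * (1 / ‖x‖) := by ring
  _ ≤ c₁ * ‖ContinuousLinearMap.adjoint L ψ‖ := by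
      exact mul_le_mul_of_nonneg_left h3 hc₁.le
  _ ≤ f ψ := (hf ψ).1
end
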